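/- arXiv:2410.24006 — 2 statements merged into one kernel-verified Lean document; each statement's English description precedes it below -/
import Mathlib

section
/- Let d ≥ 1 be a natural number and ξ ∈ (0,1). Let γ_d denote the standard Gaussian measure on d-dimensional Euclidean space, i.e. the product over Fin d of the real Gaussian measure with mean 0 and variance 1. Then the γ_d-measure of the set {x : ‖x‖ ≤ C_ξ} is at least 1 − ξ, where C_ξ := √(2d + 4√(d·log(1/ξ)) + 4·log(1/ξ)) and ‖·‖ is the Euclidean (ℓ₂) norm. -/
/-!
Chernoff bound for `‖x‖²`: each coordinate contributes `E exp(a x²) = (1 - 2a)^{-1/2}`, so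
`E exp(‖x‖²/4) = √2^d` and `P(‖x‖² ≥ r) ≤ √2^d e^{-r/4} ≤ e^{d/2 - r/4}`. For `r = C_ξ²` the
exponent is at most `-log(1/ξ)`.
-/

open MeasureTheory ProbabilityTheory Real

/-- The standard Gaussian measure on `EuclideanSpace ℝ (Fin d)`, i.e. the `d`-fold product of
the one-dimensional Gaussian measure with mean `0` and variance `1`, transported to the
Euclidean space with its `ℓ₂` norm. -/
noncomputable def stdGaussianE (d : ℕ) : Measure (EuclideanSpace ℝ (Fin d)) :=
  (Measure.pi fun _ : Fin d => gaussianReal 0 1).map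
    (MeasurableEquiv.toLp 2 (Fin d → ℝ))

lemma gaussianPDFReal_zero_one_mul_exp_mul_sq (a x : ℝ) :
    gaussianPDFReal 0 1 x * exp (a * x ^ 2) = (√(2 * π))⁻¹ * exp (-(1 / 2 - a) * x ^ 2) := by
  simp only [gaussianPDFReal, NNReal.coe_one, mul_one, sub_zero]
  rw [mul_assoc, ← exp_add]
  ring_nf

lemma integrable_exp_mul_sq_gaussianReal {a : ℝ} (ha : a < 1 / 2) :
    Integrable (fun x => exp (a * x ^ 2)) (gaussianReal 0 1) := by
  rw [gaussianReal_of_var_ne_zero 0 one_ne_zero,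
    integrable_withDensity_iff (measurable_gaussianPDF 0 1)
      (ae_of_all _ fun _ => gaussianPDF_lt_top)]
  simp_rw [toReal_gaussianPDF, mul_comm (exp _), gaussianPDFReal_zero_one_mul_exp_mul_sq]
  exact (integrable_exp_neg_mul_sq (by linarith)).const_mul _

lemma mgf_sq_gaussianReal {a : ℝ} (ha : a < 1 / 2) :
    mgf (fun x => x ^ 2) (gaussianReal 0 1) a = (√(1 - 2 * a))⁻¹ := by
  rw [mgf, integral_gaussianReal_eq_integral_smul one_ne_zero]
  simp_rw [smul_eq_mul, gaussianPDFReal_zero_one_mul_exp_mul_sq, integral_const_mul,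
    integral_gaussian]
  have h : 0 < 1 - 2 * a := by linarith
  rw [← sqrt_inv, ← sqrt_mul (by positivity), ← sqrt_inv]
  congr 1
  field_simp

instance (d : ℕ) : IsProbabilityMeasure (stdGaussianE d) :=
  Measure.isProbabilityMeasure_map (MeasurableEquiv.measurable _).aemeasurable

lemma exp_mul_norm_sq_toLp {d : ℕ} (a : ℝ) (y : Fin d → ℝ) :
    exp (a * ‖WithLp.toLp 2 y‖ ^ 2) = ∏ i, exp (a * y i ^ 2) := by
  rw [EuclideanSpace.real_norm_sq_eq, Finset.mul_sum, exp_sum]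

lemma integrable_exp_mul_norm_sq_stdGaussianE (d : ℕ) {a : ℝ} (ha : a < 1 / 2) :
    Integrable (fun x => exp (a * ‖x‖ ^ 2)) (stdGaussianE d) := by
  rw [stdGaussianE, integrable_map_equiv]
  simp_rw [Function.comp_def, MeasurableEquiv.coe_toLp, exp_mul_norm_sq_toLp]
  exact Integrable.fintype_prod fun _ => integrable_exp_mul_sq_gaussianReal ha

lemma mgf_norm_sq_stdGaussianE (d : ℕ) {a : ℝ} (ha : a < 1 / 2) :
    mgf (fun x => ‖x‖ ^ 2) (stdGaussianE d) a = (√(1 - 2 * a))⁻¹ ^ d := by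
  rw [mgf, stdGaussianE, integral_map_equiv]
  simp_rw [MeasurableEquiv.coe_toLp, exp_mul_norm_sq_toLp]
  rw [integral_fintype_prod_eq_pow (fun x => exp (a * x ^ 2)), Fintype.card_fin]
  exact congrArg (· ^ d) (mgf_sq_gaussianReal ha)

lemma stdGaussianE_real_norm_sq_ge_le (d : ℕ) (r : ℝ) :
    (stdGaussianE d).real {x | r ≤ ‖x‖ ^ 2} ≤ √2 ^ d * exp (-r / 4) := by
  have h := measure_ge_le_exp_mul_mgf r (by norm_num : (0 : ℝ) ≤ 1 / 4)
    (integrable_exp_mul_norm_sq_stdGaussianE d (by norm_num : (1 / 4 : ℝ) < 1 / 2))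
  rw [mgf_norm_sq_stdGaussianE d (by norm_num),
    show (√(1 - 2 * (1 / 4) : ℝ))⁻¹ = √2 by rw [← sqrt_inv]; norm_num] at h
  rwa [mul_comm, neg_mul, one_div_mul_eq_div, ← neg_div] at h

lemma sqrt_two_pow_le_exp (d : ℕ) : √2 ^ d ≤ exp (d / 2) := by
  rw [div_eq_mul_one_div, exp_nat_mul]
  gcongr
  refine sqrt_le_iff.mpr ⟨(exp_pos _).le, ?_⟩
  rw [sq, ← exp_add, add_halves]
  linarith [add_one_lt_exp one_ne_zero]

lemma ofReal_one_sub_le_of_probReal_compl_le {Ω : Type*} [MeasurableSpace Ω] {μ : Measure Ω}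
    [IsProbabilityMeasure μ] {s : Set Ω} (hs : MeasurableSet s) {ε : ℝ} (h : μ.real sᶜ ≤ ε) :
    ENNReal.ofReal (1 - ε) ≤ μ s := by
  apply ENNReal.ofReal_le_of_le_toReal
  rw [← measureReal_def]
  linarith [probReal_compl_eq_one_sub (μ := μ) hs]

theorem stdGaussian_norm_le_with_high_probability_general
    (d : ℕ) (ξ : ℝ) (hξ : ξ ∈ Set.Ioo (0 : ℝ) 1) :
    ENNReal.ofReal (1 - ξ) ≤
      stdGaussianE d {x : EuclideanSpace ℝ (Fin d) |
        ‖x‖ ≤ Real.sqrt (2 * d + 4 * Real.sqrt (d * Real.log (1 / ξ)) + 4 * Real.log (1 / ξ))} := by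
  set t := log (1 / ξ)
  set r := 2 * d + 4 * √(d * t) + 4 * t
  have htail : (stdGaussianE d).real {x | r ≤ ‖x‖ ^ 2} ≤ ξ := calc
    _ ≤ √2 ^ d * exp (-r / 4) := stdGaussianE_real_norm_sq_ge_le d r
    _ ≤ exp (d / 2) * exp (-r / 4) := by gcongr; exact sqrt_two_pow_le_exp d
    _ ≤ exp (-t) := by
      rw [← exp_add, exp_le_exp]
      linarith [sqrt_nonneg (d * t)]
    _ = ξ := by simp only [t, one_div, log_inv, neg_neg, exp_log hξ.1]
  refine ofReal_one_sub_le_of_probReal_compl_le (measurableSet_le (by fun_prop) (by fun_prop)) ?_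
  refine (measureReal_mono fun x hx => ?_).trans htail
  have hx : √r < ‖x‖ := not_le.mp hx
  exact ((sqrt_lt' ((sqrt_nonneg r).trans_lt hx)).mp hx).le

/-- With probability at least `1 - ξ`, the Euclidean norm of a `d`-dimensional standard
Gaussian vector is at most `C_ξ := √(2d + 4√(d·log(1/ξ)) + 4·log(1/ξ))`. -/
theorem stdGaussian_norm_le_with_high_probability
    (d : ℕ) (hd : 1 ≤ d) (ξ : ℝ) (hξ : ξ ∈ Set.Ioo (0 : ℝ) 1) :
    ENNReal.ofReal (1 - ξ) ≤
      stdGaussianE d {x : EuclideanSpace ℝ (Fin d) |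
        ‖x‖ ≤ Real.sqrt (2 * d + 4 * Real.sqrt (d * Real.log (1 / ξ)) + 4 * Real.log (1 / ξ))} :=
  stdGaussian_norm_le_with_high_probability_general d ξ hξ
end

section
/- Let β : ℕ → ℝ satisfy 0 < β_t < 1 for all t ≥ 1, and define ᾱ_t := ∏_{s=1}^{t} (1 − β_s). Fix x₀ ∈ ℝ and define probability measures on ℝ recursively by μ_0 := the Dirac measure at x₀ and μ_t := μ_{t−1}.bind (fun x => Gaussian measure with mean √(1 − β_t)·x and variance β_t). Then for every t ≥ 1, μ_t equals the Gaussian measure with mean √(ᾱ_t)·x₀ and variance 1 − ᾱ_t. -/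
open MeasureTheory ProbabilityTheory Real Finset

open scoped NNReal

/-!
Binding a measure `μ` with the kernel `x ↦ N(c x, w)` is the convolution of the pushforward of `μ`
under `x ↦ c x` with `N(0, w)`. For `μ = N(m, v)` this gives `N(c m, c² v + w)`, so one forward step
sends `N(√ᾱ x₀, 1 - ᾱ)` to `N(√(ᾱ (1 - β)) x₀, 1 - ᾱ (1 - β))`, and the claim follows by
induction on `t`, starting from `δ x₀ = N(x₀, 0)`.
-/

namespace MeasureTheory.Measure

variable {M : Type*} [AddMonoid M] [MeasurableSpace M] [MeasurableAdd₂ M]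

lemma measurable_map_add_left (ν : Measure M) [SFinite ν] :
    Measurable fun x : M => ν.map (x + ·) := by
  refine measurable_of_measurable_coe _ fun s hs => ?_
  simp_rw [map_apply (measurable_const_add _) hs]
  exact measurable_measure_prodMk_left (measurable_add hs)

lemma bind_map_add_left_eq_map_conv (μ ν : Measure M) [SFinite μ] [SFinite ν]
    {f : M → M} (hf : Measurable f) :
    μ.bind (fun x => ν.map (f x + ·)) = μ.map f ∗ ν := by
  have hκ : Measurable fun x => ν.map (f x + ·) := (measurable_map_add_left ν).comp hf
  ext s hs
  rw [bind_apply hs hκ.aemeasurable, conv,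
    map_apply measurable_add hs, prod_apply (measurable_add hs),
    lintegral_map (measurable_measure_prodMk_left (measurable_add hs)) hf]
  simp_rw [map_apply (measurable_const_add _) hs]
  rfl

end MeasureTheory.Measure

lemma gaussianReal_bind_gaussianReal_const_mul (m c : ℝ) (v w : ℝ≥0) :
    (gaussianReal m v).bind (fun x => gaussianReal (c * x) w)
      = gaussianReal (c * m) (NNReal.mk (c ^ 2) (sq_nonneg c) * v + w) := by
  have hkernel : (fun x => gaussianReal (c * x) w)
      = fun x => (gaussianReal 0 w).map ((c * x) + ·) := by
    simp_rw [gaussianReal_map_const_add, zero_add]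
  rw [hkernel, Measure.bind_map_add_left_eq_map_conv _ _ (measurable_const_mul c),
    gaussianReal_map_const_mul, gaussianReal_conv_gaussianReal, add_zero]

lemma gaussianReal_sqrt_mul_bind_sqrt_one_sub {a b : ℝ} (ha₀ : 0 ≤ a) (ha₁ : a ≤ 1)
    (hb₀ : 0 ≤ b) (hb₁ : b ≤ 1) (x₀ : ℝ) :
    (gaussianReal (√a * x₀) (1 - a).toNNReal).bind
        (fun x => gaussianReal (√(1 - b) * x) b.toNNReal)
      = gaussianReal (√(a * (1 - b)) * x₀) (1 - a * (1 - b)).toNNReal := by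
  rw [gaussianReal_bind_gaussianReal_const_mul]
  congr 1
  · rw [sqrt_mul ha₀, ← mul_assoc, mul_comm √(1 - b)]
  · ext
    have hvar : 0 ≤ 1 - a * (1 - b) := by nlinarith
    simp only [NNReal.coe_add, NNReal.coe_mul, NNReal.coe_mk, sq_sqrt (sub_nonneg.2 hb₁),
      coe_toNNReal _ (sub_nonneg.2 ha₁), coe_toNNReal _ hb₀, coe_toNNReal _ hvar]
    ring

/-- Equation (6) of the paper: starting from a Dirac mass at `x₀` and iterating the DDPM
forward step `x_t = √(1−β_t)·x_{t−1} + √(β_t)·ε_t` (i.e. binding with the Gaussian kernel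
`N(√(1−β_t)·x, β_t)`), the distribution at time `t ≥ 1` is the Gaussian
`N(√(ᾱ_t)·x₀, 1 − ᾱ_t)` where `ᾱ_t := ∏_{s=1}^t (1 − β_s)`. -/
theorem ddpm_forward_marginal_gaussian
    (β : ℕ → ℝ) (hβ : ∀ t, 1 ≤ t → 0 < β t ∧ β t < 1)
    (x₀ : ℝ) (μ : ℕ → Measure ℝ)
    (h0 : μ 0 = Measure.dirac x₀)
    (hrec : ∀ t, 1 ≤ t → μ t = (μ (t - 1)).bind fun x =>
      gaussianReal (Real.sqrt (1 - β t) * x) (Real.toNNReal (β t))) :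
    ∀ t, 1 ≤ t →
      μ t = gaussianReal (Real.sqrt (∏ s ∈ Finset.Icc 1 t, (1 - β s)) * x₀)
        (Real.toNNReal (1 - ∏ s ∈ Finset.Icc 1 t, (1 - β s))) := by
  -- With the empty product `ᾱ₀ = 1`, the formula also holds at `t = 0`, where it is `δ x₀`.
  suffices ∀ t, μ t = gaussianReal (√(∏ s ∈ Icc 1 t, (1 - β s)) * x₀)
      (1 - ∏ s ∈ Icc 1 t, (1 - β s)).toNNReal from fun t _ => this t
  intro t
  induction t with
  | zero => simp [h0, gaussianReal_zero_var]
  | succ t ih =>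
    obtain ⟨hβ₀, hβ₁⟩ := hβ (t + 1) (Nat.le_add_left 1 t)
    have hα₀ : 0 ≤ ∏ s ∈ Icc 1 t, (1 - β s) :=
      prod_nonneg fun s hs => sub_nonneg.2 (hβ s (mem_Icc.1 hs).1).2.le
    have hα₁ : ∏ s ∈ Icc 1 t, (1 - β s) ≤ 1 :=
      prod_le_one (fun s hs => sub_nonneg.2 (hβ s (mem_Icc.1 hs).1).2.le)
        fun s hs => sub_le_self _ (hβ s (mem_Icc.1 hs).1).1.le
    rw [hrec (t + 1) (Nat.le_add_left 1 t), Nat.add_sub_cancel, ih,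
      prod_Icc_succ_top (Nat.le_add_left 1 t),
      gaussianReal_sqrt_mul_bind_sqrt_one_sub hα₀ hα₁ hβ₀.le hβ₁.le]
end
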